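/- arXiv:1906.09156 — 8 statements merged into one kernel-verified Lean document; each statement's English description precedes it below -/
import Mathlib

section
/- Let (w_k) and (v_k) be two probability distributions on the non-negative integers with all v_k > 0. Then the Kullback–Leibler divergence D = ∑_k w_k log(w_k/v_k) satisfies D ≥ (1/2) ∑_k (w_k - v_k)² / max(w_k, v_k). -/
/-!
Pointwise, `a log (a / b) - (a - b)` is the second-order Taylor remainder of `t ↦ t log (t / b)`
at `t = b`, whose second derivative `1 / t` is at least `1 / max a b` between `a` and `b`; hence
`a log (a / b) ≥ (a - b) + (a - b)² / (2 max a b)`. Summing over `k`, the linear terms cancel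
because both distributions have total mass one, and the quadratic terms are summable since
`(a - b)² / max a b ≤ a + b`.
-/

open Real Finset

theorem Real.add_sq_div_two_le_neg_log_one_sub {x : ℝ} (h0 : 0 ≤ x) (h1 : x < 1) :
    x + x ^ 2 / 2 ≤ -log (1 - x) := by
  have hsum := hasSum_pow_div_log_of_abs_lt_one (abs_lt.2 ⟨by linarith, h1⟩)
  have := sum_le_hasSum (range 2) (fun n _ => by positivity) hsum
  norm_num [sum_range_succ] at this
  linarith

theorem Real.sq_sub_one_div_two_le_mul_log {s : ℝ} (h0 : 0 ≤ s) (h1 : s ≤ 1) :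
    (s ^ 2 - 1) / 2 ≤ s * log s := by
  have hderiv : ∀ x : ℝ, 0 < x →
      HasDerivAt (fun s => s * log s - (s ^ 2 - 1) / 2) (log x + 1 - x) x := fun x hx => by
    refine ((hasDerivAt_mul_log hx.ne').sub
      (((hasDerivAt_pow 2 x).sub_const 1).div_const 2)).congr_deriv ?_
    norm_num
  have hanti : AntitoneOn (fun s => s * log s - (s ^ 2 - 1) / 2) (Set.Ici 0) := by
    refine antitoneOn_of_deriv_nonpos (convex_Ici 0) (by fun_prop) ?_ ?_ <;> rw [interior_Ici]
    · exact fun x hx => (hderiv x hx).differentiableAt.differentiableWithinAt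
    · intro x hx
      rw [(hderiv x hx).deriv]
      linarith [log_le_sub_one_of_pos hx]
  have := hanti h0 (Set.mem_Ici.2 zero_le_one) h1
  simp only [log_one, mul_zero, one_pow, sub_self, zero_div] at this
  linarith

theorem sub_add_sq_div_max_le_mul_log {a b : ℝ} (ha : 0 ≤ a) (hb : 0 < b) :
    a - b + 1 / 2 * ((a - b) ^ 2 / max a b) ≤ a * log (a / b) := by
  rcases le_total a b with hab | hba
  · have h := sq_sub_one_div_two_le_mul_log (div_nonneg ha hb.le) ((div_le_one hb).2 hab)
    rw [max_eq_right hab]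
    have key : a - b + 1 / 2 * ((a - b) ^ 2 / b) = b * (((a / b) ^ 2 - 1) / 2) := by
      field_simp; ring
    rw [key]
    calc b * (((a / b) ^ 2 - 1) / 2) ≤ b * (a / b * log (a / b)) := by gcongr
      _ = a * log (a / b) := by rw [← mul_assoc, mul_div_cancel₀ _ hb.ne']
  · have ha0 : 0 < a := hb.trans_le hba
    have h := add_sq_div_two_le_neg_log_one_sub (x := 1 - b / a)
      (by rw [sub_nonneg]; exact (div_le_one ha0).2 hba) (by linarith [div_pos hb ha0])
    rw [max_eq_left hba]
    have key : a - b + 1 / 2 * ((a - b) ^ 2 / a) = a * (1 - b / a + (1 - b / a) ^ 2 / 2) := by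
      field_simp
    rw [key]
    calc a * (1 - b / a + (1 - b / a) ^ 2 / 2) ≤ a * -log (1 - (1 - b / a)) := by gcongr
      _ = a * log (a / b) := by rw [sub_sub_cancel, ← log_inv, inv_div]

theorem sq_sub_div_max_le_add {a b : ℝ} (ha : 0 ≤ a) (hb : 0 ≤ b) :
    (a - b) ^ 2 / max a b ≤ a + b := by
  refine div_le_of_le_mul₀ (le_max_of_le_left ha) (add_nonneg ha hb) ?_
  rcases le_total a b with hab | hba
  · rw [max_eq_right hab]; nlinarith
  · rw [max_eq_left hba]; nlinarith

theorem Summable.of_tsum_ne_zero {α M : Type*} [AddCommMonoid M] [TopologicalSpace M]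
    {f : α → M} (h : ∑' a, f a ≠ 0) : Summable f :=
  not_not.1 fun hf => h (tsum_eq_zero_of_not_summable hf)

theorem stmt_1 (w v : ℕ → ℝ)
    (hw : ∀ k, 0 ≤ w k) (hv : ∀ k, 0 < v k)
    (hw1 : ∑' k, w k = 1) (hv1 : ∑' k, v k = 1)
    (hD : Summable fun k => w k * Real.log (w k / v k)) :
    (∑' k, w k * Real.log (w k / v k)) ≥
      (1 / 2) * ∑' k, (w k - v k) ^ 2 / max (w k) (v k) := by
  have hSw := Summable.of_tsum_ne_zero (hw1 ▸ one_ne_zero)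
  have hSv := Summable.of_tsum_ne_zero (hv1 ▸ one_ne_zero)
  have hSq : Summable fun k => (w k - v k) ^ 2 / max (w k) (v k) :=
    (hSw.add hSv).of_nonneg_of_le (fun k => div_nonneg (sq_nonneg _) (le_max_of_le_left (hw k)))
      (fun k => sq_sub_div_max_le_add (hw k) (hv k).le)
  calc (1 / 2) * ∑' k, (w k - v k) ^ 2 / max (w k) (v k)
      = ∑' k, (w k - v k) + (1 / 2) * ∑' k, (w k - v k) ^ 2 / max (w k) (v k) := by
        rw [hSw.tsum_sub hSv, hw1, hv1, sub_self, zero_add]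
    _ = ∑' k, (w k - v k + 1 / 2 * ((w k - v k) ^ 2 / max (w k) (v k))) := by
        rw [(hSw.sub hSv).tsum_add (hSq.mul_left _), tsum_mul_left]
    _ ≤ ∑' k, w k * Real.log (w k / v k) :=
        ((hSw.sub hSv).add (hSq.mul_left _)).tsum_le_tsum
          (fun k => sub_add_sq_div_max_le_mul_log (hw k) (hv k)) hD
end

section
/- Let f(k) = (λ^k / k!) · e^{-λ} be the Poisson probability mass function with parameter λ > 0. Then for every integer k ≥ 1, f(k) ≤ 1/√(2πk). -/
/-! The map `x ↦ x ^ k * exp (-x)` is maximal at `x = k`, where it equals `(k / e) ^ k`, and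
Stirling's lower bound `√(2πk) (k / e) ^ k ≤ k!` turns this into the claimed bound. -/

open Real Nat

theorem pow_mul_exp_neg_le_div_exp_one_pow {x : ℝ} (hx : 0 ≤ x) (n : ℕ) :
    x ^ n * exp (-x) ≤ (n / exp 1) ^ n := by
  rcases Nat.eq_zero_or_pos n with rfl | hn
  · simpa using neg_nonpos.mpr hx
  have hn' : (0 : ℝ) < n := by exact_mod_cast hn
  have key : x * exp (-(x / n)) ≤ n / exp 1 := by
    have h : x / n * exp (-(x / n - 1)) ≤ 1 := by
      rw [exp_neg, ← div_eq_mul_inv, div_le_one (exp_pos _)]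
      simpa using add_one_le_exp (x / n - 1)
    calc x * exp (-(x / n)) = n * (x / n * exp (-(x / n - 1))) / exp 1 := by
          rw [neg_sub, exp_sub, exp_neg]; field_simp
      _ ≤ n / exp 1 := by gcongr; exact mul_le_of_le_one_right hn'.le h
  calc x ^ n * exp (-x) = (x * exp (-(x / n))) ^ n := by
        rw [mul_pow, ← exp_nat_mul]; field_simp
    _ ≤ (n / exp 1) ^ n := pow_le_pow_left₀ (by positivity) key n

theorem stmt_4 (lam : ℝ) (hlam : 0 < lam) (k : ℕ) (hk : 1 ≤ k) :
    lam ^ k / (Nat.factorial k) * Real.exp (-lam) ≤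
      1 / Real.sqrt (2 * Real.pi * k) := by
  have hk' : (0 : ℝ) < k := by exact_mod_cast hk
  have hsqrt : 0 < √(2 * π * k) := by positivity
  calc lam ^ k / k ! * exp (-lam) = lam ^ k * exp (-lam) / k ! := by ring
    _ ≤ (k / exp 1) ^ k / k ! := by gcongr; exact pow_mul_exp_neg_le_div_exp_one_pow hlam.le k
    _ ≤ 1 / √(2 * π * k) := by
        rw [div_le_div_iff₀ (by positivity) hsqrt, one_mul, mul_comm]
        exact Stirling.le_factorial_stirling k
end

section
/- Let f(k) = (λ^k / k!) · e^{-λ} with λ > 0. For every integer k with 1 ≤ k ≤ 2λ, f(k) ≤ (1/√(2πk)) · exp(-(k-λ)²/(3λ)). -/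
/-!
Stirling's bound `k! ≥ √(2πk) (k/e)^k` turns `λ^k e^{-λ} / k!` into at most
`exp (-(k log (k/λ) - k + λ)) / √(2πk)`. With `x = k/λ ∈ (0, 2]` the exponent is
`λ (x log x - x + 1)`, and `x log x - x + 1 ≥ (x - 1)² / 3` there: the difference vanishes at
`x = 1` and its derivative `log x - 2(x - 1)/3` is `≤ 0` below `1` (as `log x ≤ x - 1`) and
`≥ 0` on `[1, 2]` (as `log` lies above its chord `(x - 1) log 2` and `log 2 > 2/3`).
-/

open Real

lemma two_div_three_mul_sub_one_le_log {y : ℝ} (hy₁ : 1 ≤ y) (hy₂ : y ≤ 2) :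
    2 / 3 * (y - 1) ≤ log y := by
  have hchord := strictConcaveOn_log_Ioi.concaveOn.2 (Set.mem_Ioi.2 one_pos)
    (Set.mem_Ioi.2 two_pos) (by linarith : 0 ≤ 2 - y) (by linarith : 0 ≤ y - 1) (by ring)
  simp only [smul_eq_mul, log_one, mul_zero, zero_add] at hchord
  rw [show (2 - y) * 1 + (y - 1) * 2 = y by ring] at hchord
  nlinarith [log_two_gt_d9]

lemma hasDerivAt_mul_log_sub_sq {y : ℝ} (hy : 0 < y) :
    HasDerivAt (fun x => x * log x - x + 1 - (x - 1) ^ 2 / 3) (log y - 2 / 3 * (y - 1)) y := by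
  have h := ((((hasDerivAt_id y).mul (hasDerivAt_log hy.ne')).sub (hasDerivAt_id y)).add_const
    1).sub ((((hasDerivAt_id y).sub_const 1).pow 2).div_const 3)
  refine h.congr_deriv ?_
  simp only [id, mul_inv_cancel₀ hy.ne']
  ring

lemma sq_sub_one_div_three_le_mul_log {x : ℝ} (hx₀ : 0 < x) (hx₂ : x ≤ 2) :
    (x - 1) ^ 2 / 3 ≤ x * log x - x + 1 := by
  set g : ℝ → ℝ := fun x => x * log x - x + 1 - (x - 1) ^ 2 / 3
  suffices g 1 ≤ g x by simpa [g] using this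
  have hcont : ∀ {a b : ℝ}, 0 < a → ContinuousOn g (Set.Icc a b) := fun ha y hy =>
    (hasDerivAt_mul_log_sub_sq (ha.trans_le hy.1)).continuousAt.continuousWithinAt
  have hderiv : ∀ {a b : ℝ}, 0 < a → ∀ y ∈ interior (Set.Icc a b),
      HasDerivWithinAt g (log y - 2 / 3 * (y - 1)) (interior (Set.Icc a b)) y := by
    intro a b ha y hy
    rw [interior_Icc] at hy
    exact (hasDerivAt_mul_log_sub_sq (ha.trans hy.1)).hasDerivWithinAt
  rcases le_total x 1 with hx₁ | hx₁
  · refine antitoneOn_of_hasDerivWithinAt_nonpos (convex_Icc x 1) (hcont hx₀) (hderiv hx₀) ?_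
      (Set.left_mem_Icc.2 hx₁) (Set.right_mem_Icc.2 hx₁) hx₁
    intro y hy
    rw [interior_Icc] at hy
    linarith [log_le_sub_one_of_pos (hx₀.trans hy.1), hy.2]
  · refine monotoneOn_of_hasDerivWithinAt_nonneg (convex_Icc 1 x) (hcont one_pos)
      (hderiv one_pos) ?_
      (Set.left_mem_Icc.2 hx₁) (Set.right_mem_Icc.2 hx₁) hx₁
    intro y hy
    rw [interior_Icc] at hy
    linarith [two_div_three_mul_sub_one_le_log hy.1.le (hy.2.le.trans hx₂)]

lemma sq_sub_div_three_mul_le_mul_log_div {a b : ℝ} (ha : 0 < a) (hb : 0 < b)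
    (hab : a ≤ 2 * b) :
    (a - b) ^ 2 / (3 * b) ≤ a * log (a / b) - a + b := by
  have h := mul_le_mul_of_nonneg_left
    (sq_sub_one_div_three_le_mul_log (div_pos ha hb) ((div_le_iff₀ hb).2 (by linarith))) hb.le
  rwa [show b * ((a / b - 1) ^ 2 / 3) = (a - b) ^ 2 / (3 * b) by field_simp,
    mul_add, mul_sub, ← mul_assoc, mul_div_cancel₀ a hb.ne', mul_one] at h

lemma pow_div_factorial_mul_exp_neg_le {lam : ℝ} (hlam : 0 < lam) {k : ℕ} (hk : k ≠ 0) :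
    lam ^ k / k.factorial * exp (-lam) ≤
      1 / √(2 * π * k) * exp (-(k * log (k / lam) - k + lam)) := by
  have hk₀ : (0 : ℝ) < k := by positivity
  have hpow : (k / exp 1) ^ k * exp (-(k * log (k / lam) - k + lam)) = lam ^ k * exp (-lam) := by
    rw [show -(k * log (k / lam) - k + lam) = k * (log (lam / k) + 1) + -lam by
      rw [log_div hlam.ne' hk₀.ne', log_div hk₀.ne' hlam.ne']; ring,
      exp_add, exp_nat_mul, exp_add, exp_log (div_pos hlam hk₀), ← mul_assoc, ← mul_pow]
    congr 2
    field_simp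
  calc lam ^ k / k.factorial * exp (-lam) = lam ^ k * exp (-lam) / k.factorial := by ring
    _ ≤ lam ^ k * exp (-lam) / (√(2 * π * k) * (k / exp 1) ^ k) := by
      gcongr
      exact Stirling.le_factorial_stirling k
    _ = _ := by
      rw [← hpow]
      field_simp

theorem stmt_5 (lam : ℝ) (hlam : 0 < lam) (k : ℕ) (hk1 : 1 ≤ k)
    (hk2 : (k : ℝ) ≤ 2 * lam) :
    lam ^ k / (Nat.factorial k) * Real.exp (-lam) ≤
      1 / Real.sqrt (2 * Real.pi * k) * Real.exp (-((k : ℝ) - lam) ^ 2 / (3 * lam)) := by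
  refine (pow_div_factorial_mul_exp_neg_le hlam (by omega)).trans ?_
  gcongr
  rw [neg_div, neg_le_neg_iff]
  exact sq_sub_div_three_mul_le_mul_log_div (by positivity) hlam hk2
end

section
/- Let f(k) = (λ^k / k!) · e^{-λ} with λ > 0. For every integer k ≥ 1 with k ≥ λ, f(k) ≥ (1/(e√k)) · exp(-(k-λ)²/(2λ)). -/
/-!
Bounding `k!` by `e √k (k/e)^k` (the Stirling sequence is decreasing, with value `e/√2` at `1`),
it remains to show `k log (k/λ) ≤ (k - λ) + (k - λ)² / (2λ)`. With `u = k/λ ≥ 1` this is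
`u log u ≤ (u² - 1)/2`, whose two sides agree at `u = 1` and whose derivative gap
`u - 1 - log u` is nonnegative.
-/

open Real Set

lemma mul_log_le_sq_sub_one_div_two {u : ℝ} (hu : 1 ≤ u) : u * log u ≤ (u ^ 2 - 1) / 2 := by
  let g : ℝ → ℝ := fun x ↦ (x ^ 2 - 1) / 2 - x * log x
  have hg : MonotoneOn g (Ici 1) := by
    refine monotoneOn_of_hasDerivWithinAt_nonneg (f' := fun x ↦ x - (log x + 1)) (convex_Ici 1)
      ((by fun_prop : Continuous fun x : ℝ ↦ (x ^ 2 - 1) / 2).sub continuous_mul_log).continuousOn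
      (fun x hx ↦ ?_) (fun x hx ↦ ?_)
    all_goals rw [interior_Ici, mem_Ioi] at hx
    · have hsq : HasDerivAt (fun x : ℝ ↦ (x ^ 2 - 1) / 2) x x := by
        simpa using ((hasDerivAt_pow 2 x).sub_const 1).div_const 2
      exact (hsq.sub (hasDerivAt_mul_log (by positivity))).hasDerivWithinAt
    · linarith [log_le_sub_one_of_pos (zero_lt_one.trans hx)]
  simpa [g] using hg self_mem_Ici hu hu

lemma factorial_le_exp_one_mul_sqrt_mul_pow {n : ℕ} (hn : n ≠ 0) :
    (n.factorial : ℝ) ≤ exp 1 * √n * (n / exp 1) ^ n := by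
  obtain ⟨m, rfl⟩ := Nat.exists_eq_succ_of_ne_zero hn
  have hseq : Stirling.stirlingSeq (m + 1) ≤ exp 1 / √2 :=
    Stirling.stirlingSeq_one ▸ Stirling.stirlingSeq'_antitone (Nat.zero_le m)
  have hpos : (0 : ℝ) < √(2 * (m + 1 : ℕ)) * ((m + 1 : ℕ) / exp 1) ^ (m + 1) := by positivity
  calc ((m + 1).factorial : ℝ)
      = Stirling.stirlingSeq (m + 1) * (√(2 * (m + 1 : ℕ)) * ((m + 1 : ℕ) / exp 1) ^ (m + 1)) :=
        (div_mul_cancel₀ _ hpos.ne').symm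
    _ ≤ exp 1 / √2 * (√(2 * (m + 1 : ℕ)) * ((m + 1 : ℕ) / exp 1) ^ (m + 1)) := by gcongr
    _ = exp 1 * √(m + 1 : ℕ) * ((m + 1 : ℕ) / exp 1) ^ (m + 1) := by
        rw [sqrt_mul zero_le_two]
        field_simp

lemma exp_neg_sq_div_le_div_pow_mul_exp {y : ℝ} {n : ℕ} (hy : 0 < y) (hyn : y ≤ n) :
    exp (-(n - y) ^ 2 / (2 * y)) ≤ (y / n) ^ n * exp (n - y) := by
  have hn : (0 : ℝ) < n := hy.trans_le hyn
  have hlog : n * log (n / y) ≤ (n ^ 2 - y ^ 2) / (2 * y) := by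
    have h := mul_log_le_sq_sub_one_div_two ((one_le_div hy).mpr hyn)
    rw [div_mul_eq_mul_div, div_le_iff₀ hy] at h
    rw [le_div_iff₀ (by positivity)]
    field_simp at h ⊢
    linarith
  rw [← exp_log (pow_pos (div_pos hy hn) n), ← exp_add, exp_le_exp, log_pow, log_div hy.ne' hn.ne']
  rw [log_div hn.ne' hy.ne'] at hlog
  have : -(n - y) ^ 2 / (2 * y) = n - y - (n ^ 2 - y ^ 2) / (2 * y) := by field_simp; ring
  linarith

theorem stmt_6_general (lam : ℝ) (hlam : 0 < lam) (k : ℕ)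
    (hk : lam ≤ (k : ℝ)) :
    lam ^ k / (Nat.factorial k) * Real.exp (-lam) ≥
      1 / (Real.exp 1 * Real.sqrt k) * Real.exp (-((k : ℝ) - lam) ^ 2 / (2 * lam)) := by
  have hk0 : (0 : ℝ) < k := hlam.trans_le hk
  calc 1 / (exp 1 * √k) * exp (-(k - lam) ^ 2 / (2 * lam))
      ≤ 1 / (exp 1 * √k) * ((lam / k) ^ k * exp (k - lam)) := by
        gcongr
        exact exp_neg_sq_div_le_div_pow_mul_exp hlam hk
    _ = lam ^ k / (exp 1 * √k * (k / exp 1) ^ k) * exp (-lam) := by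
        rw [sub_eq_add_neg, exp_add, ← exp_one_pow, div_pow, div_pow]
        field_simp
    _ ≤ lam ^ k / k.factorial * exp (-lam) := by
        gcongr
        exact factorial_le_exp_one_mul_sqrt_mul_pow (by exact_mod_cast hk0.ne')

theorem stmt_6 (lam : ℝ) (hlam : 0 < lam) (k : ℕ) (hk1 : 1 ≤ k)
    (hk : lam ≤ (k : ℝ)) :
    lam ^ k / (Nat.factorial k) * Real.exp (-lam) ≥
      1 / (Real.exp 1 * Real.sqrt k) * Real.exp (-((k : ℝ) - lam) ^ 2 / (2 * lam)) :=
  stmt_6_general lam hlam k hk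
end

section
/- For all p_1,…,p_n ∈ [0,1], writing r > 0 and g(re^{iθ}) = ∏_{l=1}^n (q_l + p_l r e^{iθ}) with q_l = 1 - p_l, one has for every θ ∈ [-π, π]: ∏_{l=1}^n |q_l + p_l r e^{iθ}| / (q_l + p_l r) ≤ exp{ -(2θ²/π²) ∑_{l=1}^n q_l p_l r / (q_l + p_l r)² }. -/
/-!
Since the exponential of a sum is a product, it suffices to bound each factor `‖a + b e^{iθ}‖ / s`
with `a, b ≥ 0` and `s = a + b`. By the law of cosines and `cos θ ≤ 1 - 2θ²/π²` on `[-π, π]`,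
`‖a + b e^{iθ}‖² ≤ s² (1 - x)` with `x = 4abθ²/(π²s²)`, and `1 - x ≤ e^{-x}` gives the bound
after taking square roots.
-/

open Real

lemma norm_sq_ofReal_add_mul_exp_mul_I (a b θ : ℝ) :
    ‖(a : ℂ) + b * Complex.exp (θ * Complex.I)‖ ^ 2 = a ^ 2 + b ^ 2 + 2 * a * b * cos θ := by
  rw [Complex.sq_norm, Complex.exp_mul_I, ← Complex.ofReal_cos, ← Complex.ofReal_sin,
    mul_add, ← mul_assoc, ← add_assoc, ← Complex.ofReal_mul, ← Complex.ofReal_mul,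
    ← Complex.ofReal_add, Complex.normSq_add_mul_I]
  linear_combination b ^ 2 * sin_sq_add_cos_sq θ

lemma norm_ofReal_add_mul_exp_div_le {a b θ : ℝ} (ha : 0 ≤ a) (hb : 0 ≤ b) (hθ : |θ| ≤ π) :
    ‖(a : ℂ) + b * Complex.exp (θ * Complex.I)‖ / (a + b) ≤
      exp (-(2 * θ ^ 2 / π ^ 2) * (a * b / (a + b) ^ 2)) := by
  rcases (add_nonneg ha hb).eq_or_lt with hs | hs
  · rw [← hs, div_zero]
    positivity
  set c := -(2 * θ ^ 2 / π ^ 2) * (a * b / (a + b) ^ 2)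
  have hsq : (‖(a : ℂ) + b * Complex.exp (θ * Complex.I)‖ / (a + b)) ^ 2 ≤ 1 + 2 * c := by
    have hcos := mul_le_mul_of_nonneg_left (cos_le_one_sub_mul_cos_sq hθ)
      (by positivity : 0 ≤ 2 * a * b)
    rw [div_pow, div_le_iff₀ (by positivity), norm_sq_ofReal_add_mul_exp_mul_I]
    have hexpand :
        (1 + 2 * c) * (a + b) ^ 2 = a ^ 2 + b ^ 2 + 2 * a * b * (1 - 2 / π ^ 2 * θ ^ 2) := by
      simp only [c]
      field_simp
      ring
    linarith
  have hexp : 1 + 2 * c ≤ exp c ^ 2 := by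
    rw [← exp_nat_mul, add_comm]
    exact_mod_cast add_one_le_exp (2 * c)
  exact (pow_le_pow_iff_left₀ (by positivity) (exp_pos c).le two_ne_zero).1 (hsq.trans hexp)

theorem stmt_9 (n : ℕ) (p : Fin n → ℝ) (hp : ∀ l, p l ∈ Set.Icc (0 : ℝ) 1)
    (r : ℝ) (hr : 0 < r) (θ : ℝ) (hθ : θ ∈ Set.Icc (-Real.pi) Real.pi) :
    ∏ l, ‖(1 - p l : ℝ) + (p l : ℂ) * r * Complex.exp (θ * Complex.I)‖ /
        ((1 - p l) + p l * r) ≤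
      Real.exp (-(2 * θ ^ 2 / Real.pi ^ 2) *
        ∑ l, (1 - p l) * p l * r / ((1 - p l) + p l * r) ^ 2) := by
  have hq : ∀ l, 0 ≤ 1 - p l := fun l ↦ sub_nonneg.2 (hp l).2
  have hpr : ∀ l, 0 ≤ p l * r := fun l ↦ mul_nonneg (hp l).1 hr.le
  rw [Finset.mul_sum, exp_sum]
  refine Finset.prod_le_prod (fun l _ ↦ div_nonneg (norm_nonneg _) (add_nonneg (hq l) (hpr l)))
    fun l _ ↦ ?_
  have h := norm_ofReal_add_mul_exp_div_le (hq l) (hpr l) (abs_le.2 hθ)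
  rwa [Complex.ofReal_mul, ← mul_assoc (1 - p l)] at h
end

section
/- Let X and Z be random variables taking values in the non-negative integers with probability mass functions (w_k) and (v_k), where v_k > 0 for all k, and assume w_k/v_k is bounded. Fix α ≥ 2. Then the Tsallis relative entropy T_α = (1/(α-1))[∑_k (w_k/v_k)^α v_k - 1] satisfies T_α ≤ (2^α/(α-1)) (T_2 + χ_α), where T_2 = ∑_k (w_k - v_k)²/v_k and χ_α = ∑_k |w_k - v_k|^α / v_k^{α-1}. -/
/-!
With `t = w k / v k`, multiply the pointwise inequality
`t ^ α ≤ 1 + α (t - 1) + 2 ^ α ((t - 1) ^ 2 + |t - 1| ^ α)` (`t ≥ 0`) by `v k` and sum: the linear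
terms sum to `∑ w - ∑ v = 0`. For `t ≥ 2` the inequality holds because `t ≤ 2 (t - 1)`. For
`s = t - 1 ∈ [-1, 1]`, the Taylor remainder is `(1 + s) ^ α - 1 - α s = α ∫₀¹ s g(s x) dx` with
`g u = (1 + u) ^ (α - 1) - 1`; convexity of `g` (for `s ≥ 0`) and Bernoulli's inequality
(for `s ≤ 0`) give `s g(s x) ≤ s ^ 2 g(x)`, so the remainder is at most `s ^ 2` times its value
`2 ^ α - 1 - α` at `s = 1`.
-/

open Real intervalIntegral

namespace Real

theorem one_add_rpow_sub_one_sub_mul_eq_integral {α : ℝ} (hα : 1 ≤ α) (s : ℝ) :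
    (1 + s) ^ α - 1 - α * s = α * ∫ u in (0 : ℝ)..s, ((1 + u) ^ (α - 1) - 1) := by
  have hcont : Continuous fun u : ℝ ↦ (1 + u) ^ (α - 1) :=
    (continuous_rpow_const (by linarith)).comp (continuous_const.add continuous_id)
  have hprim : ∫ u in (0 : ℝ)..s, (1 + u) ^ (α - 1) = ((1 + s) ^ α - 1) / α := by
    rw [integral_comp_add_left (fun x ↦ x ^ (α - 1)), integral_rpow (by left; linarith)]
    simp
  rw [integral_sub (hcont.intervalIntegrable _ _) intervalIntegrable_const, hprim]
  simp only [integral_const, sub_zero, smul_eq_mul, mul_one]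
  field_simp

theorem mul_one_add_mul_rpow_sub_one_le {p s x : ℝ} (hp : 1 ≤ p) (hs : s ∈ Set.Icc (-1 : ℝ) 1)
    (hx : x ∈ Set.Icc (0 : ℝ) 1) :
    s * ((1 + s * x) ^ p - 1) ≤ s ^ 2 * ((1 + x) ^ p - 1) := by
  obtain ⟨hs₁, hs₂⟩ := hs
  obtain ⟨hx₀, hx₁⟩ := hx
  rcases le_total 0 s with h | h
  · -- `1 + s x` is the convex combination `(1 - s) • 1 + s • (1 + x)`.
    have hconv := (convexOn_rpow hp).2 (Set.mem_Ici.2 zero_le_one)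
      (Set.mem_Ici.2 (by linarith : (0 : ℝ) ≤ 1 + x)) (by linarith : (0 : ℝ) ≤ 1 - s) h
      (by ring)
    simp only [smul_eq_mul, one_rpow, mul_one] at hconv
    rw [show (1 - s) + s * (1 + x) = 1 + s * x by ring] at hconv
    nlinarith
  · have hsx := one_add_mul_self_le_rpow_one_add (by nlinarith : -1 ≤ s * x) hp
    have hx' := one_add_mul_self_le_rpow_one_add (by linarith : -1 ≤ x) hp
    nlinarith [sq_nonneg s]

theorem one_add_rpow_sub_one_sub_mul_le {α s : ℝ} (hα : 2 ≤ α) (hs : s ∈ Set.Icc (-1 : ℝ) 1) :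
    (1 + s) ^ α - 1 - α * s ≤ (2 ^ α - 1 - α) * s ^ 2 := by
  set g : ℝ → ℝ := fun u ↦ (1 + u) ^ (α - 1) - 1
  have hg : Continuous g :=
    ((continuous_rpow_const (by linarith)).comp (continuous_const.add continuous_id)).sub
      continuous_const
  have hsubst : ∫ u in (0 : ℝ)..s, g u = ∫ x in (0 : ℝ)..1, s * g (s * x) := by
    rw [integral_const_mul, ← smul_eq_mul, smul_integral_comp_mul_left, mul_zero, mul_one]
  have hmono : ∫ x in (0 : ℝ)..1, s * g (s * x) ≤ ∫ x in (0 : ℝ)..1, s ^ 2 * g x :=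
    integral_mono_on zero_le_one
      ((continuous_const.mul (hg.comp (continuous_const.mul continuous_id))).intervalIntegrable _ _)
      ((continuous_const.mul hg).intervalIntegrable _ _)
      fun x hx ↦ mul_one_add_mul_rpow_sub_one_le (by linarith) hs hx
  have h₁ : 2 ^ α - 1 - α = α * ∫ x in (0 : ℝ)..1, g x := by
    have := one_add_rpow_sub_one_sub_mul_eq_integral (α := α) (by linarith) 1
    rwa [one_add_one_eq_two, mul_one] at this
  calc (1 + s) ^ α - 1 - α * s = α * ∫ u in (0 : ℝ)..s, g u :=
        one_add_rpow_sub_one_sub_mul_eq_integral (by linarith) s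
    _ = α * ∫ x in (0 : ℝ)..1, s * g (s * x) := by rw [hsubst]
    _ ≤ α * ∫ x in (0 : ℝ)..1, s ^ 2 * g x := mul_le_mul_of_nonneg_left hmono (by linarith)
    _ = (2 ^ α - 1 - α) * s ^ 2 := by rw [integral_const_mul, h₁]; ring

theorem rpow_le_two_rpow_mul_sub_one_rpow {α t : ℝ} (hα : 0 ≤ α) (ht : 2 ≤ t) :
    t ^ α ≤ 2 ^ α * (t - 1) ^ α := by
  rw [← mul_rpow zero_le_two (by linarith)]
  exact rpow_le_rpow (by linarith) (by linarith) hα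

theorem rpow_le_one_add_mul_sub_one_add {α t : ℝ} (hα : 2 ≤ α) (ht : 0 ≤ t) :
    t ^ α ≤ 1 + α * (t - 1) + 2 ^ α * ((t - 1) ^ 2 + |t - 1| ^ α) := by
  have h2α : 0 < (2 : ℝ) ^ α := rpow_pos_of_pos two_pos α
  rcases le_total t 2 with ht₂ | ht₂
  · have := one_add_rpow_sub_one_sub_mul_le hα (s := t - 1) ⟨by linarith, by linarith⟩
    rw [add_sub_cancel] at this
    nlinarith [rpow_nonneg (abs_nonneg (t - 1)) α, sq_nonneg (t - 1)]
  · have := rpow_le_two_rpow_mul_sub_one_rpow (α := α) (by linarith) ht₂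
    rw [abs_of_nonneg (by linarith : 0 ≤ t - 1)]
    nlinarith [sq_nonneg (t - 1)]

theorem sq_sub_div_eq_sq_div_sub_one_mul {w v : ℝ} (hv : v ≠ 0) :
    (w - v) ^ 2 / v = (w / v - 1) ^ 2 * v := by
  field_simp

theorem abs_sub_rpow_div_rpow_eq_abs_div_sub_one_rpow_mul {α w v : ℝ} (hv : 0 < v) :
    |w - v| ^ α / v ^ (α - 1) = |w / v - 1| ^ α * v := by
  rw [div_sub_one hv.ne', abs_div, abs_of_pos hv, div_rpow (abs_nonneg _) hv.le,
    rpow_sub_one hv.ne']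
  field_simp

theorem div_rpow_mul_le {α w v : ℝ} (hα : 2 ≤ α) (hw : 0 ≤ w) (hv : 0 < v) :
    (w / v) ^ α * v ≤
      v + α * (w - v) + 2 ^ α * ((w - v) ^ 2 / v + |w - v| ^ α / v ^ (α - 1)) := by
  rw [sq_sub_div_eq_sq_div_sub_one_mul hv.ne', abs_sub_rpow_div_rpow_eq_abs_div_sub_one_rpow_mul hv]
  calc (w / v) ^ α * v
      ≤ (1 + α * (w / v - 1) + 2 ^ α * ((w / v - 1) ^ 2 + |w / v - 1| ^ α)) * v :=
        mul_le_mul_of_nonneg_right (rpow_le_one_add_mul_sub_one_add hα (by positivity)) hv.le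
    _ = v + α * (w - v) + 2 ^ α * ((w / v - 1) ^ 2 * v + |w / v - 1| ^ α * v) := by
        field_simp

end Real

theorem Summable.mul_of_nonneg_of_le {ι : Type*} {f v : ι → ℝ} {C : ℝ} (hv : Summable v)
    (hv₀ : ∀ k, 0 ≤ v k) (hf₀ : ∀ k, 0 ≤ f k) (hfC : ∀ k, f k ≤ C) :
    Summable fun k ↦ f k * v k :=
  (hv.mul_left C).of_nonneg_of_le (fun k ↦ mul_nonneg (hf₀ k) (hv₀ k))
    fun k ↦ mul_le_mul_of_nonneg_right (hfC k) (hv₀ k)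

theorem tsum_div_rpow_mul_le {ι : Type*} {w v : ι → ℝ} {α M : ℝ} (hα : 2 ≤ α)
    (hw : ∀ k, 0 ≤ w k) (hv : ∀ k, 0 < v k) (hws : Summable w) (hvs : Summable v)
    (hM : ∀ k, w k / v k ≤ M) :
    ∑' k, (w k / v k) ^ α * v k ≤
      ∑' k, v k + α * (∑' k, w k - ∑' k, v k) +
        2 ^ α * (∑' k, (w k - v k) ^ 2 / v k + ∑' k, |w k - v k| ^ α / v k ^ (α - 1)) := by
  have ht : ∀ k, 0 ≤ w k / v k := fun k ↦ div_nonneg (hw k) (hv k).le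
  have hdev : ∀ k, |w k / v k - 1| ≤ M + 1 := fun k ↦
    abs_le.2 ⟨by linarith [ht k, hM k], by linarith [hM k]⟩
  have hv₀ : ∀ k, 0 ≤ v k := fun k ↦ (hv k).le
  have hlhs : Summable fun k ↦ (w k / v k) ^ α * v k :=
    hvs.mul_of_nonneg_of_le hv₀ (fun k ↦ rpow_nonneg (ht k) α)
      fun k ↦ rpow_le_rpow (ht k) (hM k) (by linarith)
  have hsq : Summable fun k ↦ (w k - v k) ^ 2 / v k := by
    simp_rw [fun k ↦ sq_sub_div_eq_sq_div_sub_one_mul (w := w k) (hv k).ne']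
    exact hvs.mul_of_nonneg_of_le hv₀ (fun k ↦ sq_nonneg _)
      fun k ↦ sq_le_sq' (abs_le.1 (hdev k)).1 (abs_le.1 (hdev k)).2
  have hpow : Summable fun k ↦ |w k - v k| ^ α / v k ^ (α - 1) := by
    simp_rw [fun k ↦ abs_sub_rpow_div_rpow_eq_abs_div_sub_one_rpow_mul (α := α) (w := w k) (hv k)]
    exact hvs.mul_of_nonneg_of_le hv₀ (fun k ↦ rpow_nonneg (abs_nonneg _) α)
      fun k ↦ rpow_le_rpow (abs_nonneg _) (hdev k) (by linarith)
  have hlin := hvs.add ((hws.sub hvs).mul_left α)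
  have hrem := (hsq.add hpow).mul_left (2 ^ α)
  calc ∑' k, (w k / v k) ^ α * v k
      ≤ ∑' k, (v k + α * (w k - v k) +
          2 ^ α * ((w k - v k) ^ 2 / v k + |w k - v k| ^ α / v k ^ (α - 1))) :=
        hlhs.tsum_le_tsum (fun k ↦ div_rpow_mul_le hα (hw k) (hv k)) (hlin.add hrem)
    _ = _ := by
        rw [hlin.tsum_add hrem, hvs.tsum_add ((hws.sub hvs).mul_left α), tsum_mul_left,
          hws.tsum_sub hvs, tsum_mul_left, hsq.tsum_add hpow]

theorem stmt_16 (w v : ℕ → ℝ)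
    (hw : ∀ k, 0 ≤ w k) (hv : ∀ k, 0 < v k)
    (hw1 : ∑' k, w k = 1) (hv1 : ∑' k, v k = 1)
    (hbdd : ∃ M : ℝ, ∀ k, w k / v k ≤ M)
    (α : ℝ) (hα : 2 ≤ α) :
    (1 / (α - 1)) * ((∑' k, (w k / v k) ^ α * v k) - 1) ≤
      (2 ^ α / (α - 1)) *
        ((∑' k, (w k - v k) ^ 2 / v k) +
          ∑' k, |w k - v k| ^ α / v k ^ (α - 1)) := by
  obtain ⟨M, hM⟩ := hbdd
  have hws : Summable w := by
    by_contra h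
    simp [tsum_eq_zero_of_not_summable h] at hw1
  have hvs : Summable v := by
    by_contra h
    simp [tsum_eq_zero_of_not_summable h] at hv1
  have key := tsum_div_rpow_mul_le hα hw hv hws hvs hM
  rw [hw1, hv1, sub_self, mul_zero, add_zero] at key
  calc 1 / (α - 1) * (∑' k, (w k / v k) ^ α * v k - 1)
      ≤ 1 / (α - 1) * (2 ^ α * (∑' k, (w k - v k) ^ 2 / v k +
          ∑' k, |w k - v k| ^ α / v k ^ (α - 1))) :=
        mul_le_mul_of_nonneg_left (by linarith) (one_div_nonneg.2 (by linarith))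
    _ = _ := by ring
end

section
/- Let (w_k) and (v_k) be probability distributions on the non-negative integers with all v_k > 0, and assume the series below converge. Then the difference of entropies H(v) - H(w) := -∑ v_k log v_k + ∑ w_k log w_k satisfies H(v) - H(w) ≤ χ² + H₂ · √(χ²), where χ² = ∑_k (w_k - v_k)²/v_k and H₂² = ∑_k v_k (log v_k)². -/
/-!
Write `∑ w log w - ∑ v log v = ∑ w log (w / v) + ∑ (w - v) log v`. Since `log t ≤ t - 1`,
each term `w log (w / v)` is at most `(w - v) + (w - v)² / v`, and `∑ (w - v) = 0`, so the
Kullback–Leibler part is at most `χ²`. The cross term is bounded by Cauchy–Schwarz applied to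
`(w - v) / √v` and `√v log v`.
-/

open Real

lemma summable_of_tsum_ne_zero {ι α : Type*} [AddCommMonoid α] [TopologicalSpace α] {f : ι → α}
    (h : ∑' i, f i ≠ 0) : Summable f :=
  by_contra fun hf => h (tsum_eq_zero_of_not_summable hf)

theorem summable_mul_and_tsum_mul_le_sqrt_mul_sqrt {ι : Type*} {f g : ι → ℝ}
    (hf : Summable fun i => f i ^ 2) (hg : Summable fun i => g i ^ 2) :
    (Summable fun i => f i * g i) ∧
      ∑' i, f i * g i ≤ √(∑' i, f i ^ 2) * √(∑' i, g i ^ 2) := by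
  have hsq : ∀ h : ι → ℝ, (fun i => |h i| ^ (2 : ℝ)) = fun i => h i ^ 2 := fun h => by
    ext i; rw [rpow_two, sq_abs]
  obtain ⟨habs, hle⟩ := summable_and_inner_le_Lp_mul_Lq_tsum_of_nonneg HolderConjugate.two_two
    (fun i => abs_nonneg (f i)) (fun i => abs_nonneg (g i))
    (by rwa [hsq]) (by rwa [hsq])
  simp only [← abs_mul, hsq, ← sqrt_eq_rpow] at habs hle
  exact ⟨habs.of_abs, (habs.of_abs.tsum_le_tsum (fun i => le_abs_self _) habs).trans hle⟩

theorem summable_mul_and_tsum_mul_le_sqrt_mul_sqrt_weighted {ι : Type*} {a b v : ι → ℝ}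
    (hv : ∀ i, 0 < v i) (ha : Summable fun i => a i ^ 2 / v i)
    (hb : Summable fun i => v i * b i ^ 2) :
    (Summable fun i => a i * b i) ∧
      ∑' i, a i * b i ≤ √(∑' i, v i * b i ^ 2) * √(∑' i, a i ^ 2 / v i) := by
  have hsqrt : ∀ i, √(v i) ^ 2 = v i := fun i => sq_sqrt (hv i).le
  have key := summable_mul_and_tsum_mul_le_sqrt_mul_sqrt (f := fun i => √(v i) * b i)
    (g := fun i => a i / √(v i)) (by simpa only [mul_pow, hsqrt] using hb)
    (by simpa only [div_pow, hsqrt] using ha)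
  have hfg : ∀ i, √(v i) * b i * (a i / √(v i)) = a i * b i := fun i => by
    field_simp [(sqrt_pos.2 (hv i)).ne']
  simpa only [hfg, mul_pow, div_pow, hsqrt] using key

theorem mul_log_sub_mul_log_le {w v : ℝ} (hw : 0 ≤ w) (hv : 0 < v) :
    w * log w - w * log v ≤ (w - v) + (w - v) ^ 2 / v := by
  rcases hw.eq_or_lt with rfl | hw
  · simp [sq, hv.ne']
  calc w * log w - w * log v = w * log (w / v) := by rw [log_div hw.ne' hv.ne']; ring
    _ ≤ w * (w / v - 1) := by gcongr; exact log_le_sub_one_of_pos (by positivity)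
    _ = (w - v) + (w - v) ^ 2 / v := by field_simp; ring

theorem tsum_mul_log_sub_mul_log_le_tsum_sq_div {ι : Type*} {w v : ι → ℝ}
    (hw : ∀ i, 0 ≤ w i) (hv : ∀ i, 0 < v i) (hsw : Summable w) (hsv : Summable v)
    (hwv : ∑' i, w i = ∑' i, v i) (hχ : Summable fun i => (w i - v i) ^ 2 / v i) :
    ∑' i, (w i * log (w i) - w i * log (v i)) ≤ ∑' i, (w i - v i) ^ 2 / v i := by
  by_cases hkl : Summable fun i => w i * log (w i) - w i * log (v i)
  · calc ∑' i, (w i * log (w i) - w i * log (v i))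
        ≤ ∑' i, ((w i - v i) + (w i - v i) ^ 2 / v i) :=
          hkl.tsum_le_tsum (fun i => mul_log_sub_mul_log_le (hw i) (hv i)) ((hsw.sub hsv).add hχ)
      _ = ∑' i, (w i - v i) ^ 2 / v i := by
          rw [(hsw.sub hsv).tsum_add hχ, hsw.tsum_sub hsv, hwv, sub_self, zero_add]
  · -- a divergent series has `tsum` equal to `0`
    rw [tsum_eq_zero_of_not_summable hkl]
    exact tsum_nonneg fun i => div_nonneg (sq_nonneg _) (hv i).le

theorem stmt_17 (w v : ℕ → ℝ)
    (hw : ∀ k, 0 ≤ w k) (hv : ∀ k, 0 < v k)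
    (hw1 : ∑' k, w k = 1) (hv1 : ∑' k, v k = 1)
    (h1 : Summable fun k => v k * Real.log (v k))
    (h2 : Summable fun k => w k * Real.log (w k))
    (h3 : Summable fun k => (w k - v k) ^ 2 / v k)
    (h4 : Summable fun k => v k * (Real.log (v k)) ^ 2) :
    (-∑' k, v k * Real.log (v k)) - (-∑' k, w k * Real.log (w k)) ≤
      (∑' k, (w k - v k) ^ 2 / v k) +
        Real.sqrt (∑' k, v k * (Real.log (v k)) ^ 2) *
          Real.sqrt (∑' k, (w k - v k) ^ 2 / v k) := by
  obtain ⟨hcross, hcross_le⟩ := summable_mul_and_tsum_mul_le_sqrt_mul_sqrt_weighted hv h3 h4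
  have hkl_le := tsum_mul_log_sub_mul_log_le_tsum_sq_div hw hv
    (summable_of_tsum_ne_zero (by simp [hw1])) (summable_of_tsum_ne_zero (by simp [hv1]))
    (hw1.trans hv1.symm) h3
  have hsplit : ∑' k, w k * log (w k) - ∑' k, v k * log (v k) =
      ∑' k, (w k * log (w k) - w k * log (v k)) + ∑' k, (w k - v k) * log (v k) := by
    have hkl : Summable fun k => w k * log (w k) - w k * log (v k) :=
      ((h2.sub h1).sub hcross).congr fun k => by ring
    rw [← h2.tsum_sub h1, ← hkl.tsum_add hcross]
    congr 1; ext k; ring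
  linarith
end

section
/- Let Z be Poisson with parameter λ, 0 < λ ≤ 1, and set v_k = P(Z = k) = (λ^k/k!)e^{-λ}. Then the second informational moment H₂(Z)² = ∑_{k≥0} v_k (log v_k)² satisfies H₂(Z) ≤ 5√λ · log(e/λ). -/
/-!
Write `v_k = λ^k e^{-λ} / k!` and `L = log (e / λ) = 1 - log λ`. From `log k! ≤ k log k ≤ k (k - 1)`
one gets `0 ≤ -log v_k = λ + log k! - k log λ ≤ L (k² + λ)` for every `k`, hence
`∑ v_k (log v_k)² ≤ L² E[(Z² + λ)²]`. Expanding `(k² + λ)²` in falling factorials `k(k-1)⋯(k-j+1)`,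
whose Poisson means are `λ^j`, gives `E[(Z² + λ)²] = λ + 10λ² + 8λ³ + λ⁴ ≤ 20λ`.
-/

open Real
open scoped Nat

theorem hasSum_descFactorial_mul_poisson (x : ℝ) (j : ℕ) :
    HasSum (fun k : ℕ => (k.descFactorial j : ℝ) * (x ^ k / k ! * exp (-x))) (x ^ j) := by
  rw [← hasSum_nat_add_iff' j]
  have hhead : ∑ k ∈ Finset.range j, (k.descFactorial j : ℝ) * (x ^ k / k ! * exp (-x)) = 0 :=
    Finset.sum_eq_zero fun k hk => by
      simp [Nat.descFactorial_eq_zero_iff_lt.mpr (Finset.mem_range.mp hk)]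
  have hexp : (x ^ j * exp x) * exp (-x) = x ^ j := by
    rw [mul_assoc, ← exp_add, add_neg_cancel, exp_zero, mul_one]
  have hseries : HasSum (fun n : ℕ => x ^ n / n !) (exp x) := by
    rw [exp_eq_exp_ℝ]
    exact NormedSpace.expSeries_div_hasSum_exp x
  rw [hhead, sub_zero, ← hexp]
  refine ((hseries.mul_left (x ^ j)).mul_right (exp (-x))).congr_fun fun n => ?_
  rw [← Nat.factorial_mul_descFactorial (Nat.le_add_left j n), Nat.add_sub_cancel]
  have : ((n + j).descFactorial j : ℝ) ≠ 0 := by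
    exact_mod_cast (Nat.descFactorial_pos.mpr (Nat.le_add_left j n)).ne'
  push_cast
  field_simp
  ring

theorem sq_sq_add_eq_descFactorial (k : ℕ) (x : ℝ) :
    ((k : ℝ) ^ 2 + x) ^ 2 = k.descFactorial 4 + 6 * k.descFactorial 3
      + (7 + 2 * x) * k.descFactorial 2 + (1 + 2 * x) * k.descFactorial 1
      + x ^ 2 * k.descFactorial 0 := by
  rcases k with _ | _ | _ | _ | n
  all_goals simp [Nat.descFactorial_succ]
  all_goals ring_nf

theorem hasSum_sq_sq_add_mul_poisson (x : ℝ) :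
    HasSum (fun k : ℕ => ((k : ℝ) ^ 2 + x) ^ 2 * (x ^ k / k ! * exp (-x)))
      (x + 10 * x ^ 2 + 8 * x ^ 3 + x ^ 4) := by
  have m := hasSum_descFactorial_mul_poisson x
  have hsum := (((((m 4).add ((m 3).mul_left 6)).add ((m 2).mul_left (7 + 2 * x))).add
    ((m 1).mul_left (1 + 2 * x))).add ((m 0).mul_left (x ^ 2)))
  rw [show x + 10 * x ^ 2 + 8 * x ^ 3 + x ^ 4 = x ^ 4 + 6 * x ^ 3 + (7 + 2 * x) * x ^ 2
    + (1 + 2 * x) * x ^ 1 + x ^ 2 * x ^ 0 by ring]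
  refine hsum.congr_fun fun k => ?_
  rw [sq_sq_add_eq_descFactorial]
  ring

theorem log_factorial_le (k : ℕ) : log (k ! : ℝ) ≤ k * (k - 1) := by
  rcases k.eq_zero_or_pos with rfl | hk
  · simp
  calc log (k ! : ℝ) ≤ log ((k : ℝ) ^ k) := by
        gcongr
        exact_mod_cast Nat.factorial_le_pow k
    _ = k * log k := log_pow k k
    _ ≤ k * (k - 1) := by
        gcongr
        exact log_le_sub_one_of_pos (by exact_mod_cast hk)

theorem neg_log_poisson {x : ℝ} (hx : 0 < x) (k : ℕ) :
    -log (x ^ k / k ! * exp (-x)) = x + log (k ! : ℝ) - k * log x := by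
  rw [log_mul (by positivity) (by positivity), log_div (by positivity) (by positivity), log_exp,
    log_pow]
  ring

theorem sq_log_poisson_le {x : ℝ} (hx0 : 0 < x) (hx1 : x ≤ 1) (k : ℕ) :
    log (x ^ k / k ! * exp (-x)) ^ 2 ≤ log (exp 1 / x) ^ 2 * ((k : ℝ) ^ 2 + x) ^ 2 := by
  have hlog : log x ≤ 0 := log_nonpos hx0.le hx1
  have hL : log (exp 1 / x) = 1 - log x := by
    rw [log_div (exp_ne_zero 1) hx0.ne', log_exp]
  have hfac := log_factorial_le k
  have hfac0 : 0 ≤ log (k ! : ℝ) := log_nonneg (by exact_mod_cast k.factorial_pos)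
  have hk : (0 : ℝ) ≤ k * (k - 1) := hfac0.trans hfac
  have hneg := neg_log_poisson hx0 k
  have hlo : 0 ≤ -log (x ^ k / k ! * exp (-x)) := by
    rw [hneg]; nlinarith [Nat.cast_nonneg (α := ℝ) k]
  have hhi : -log (x ^ k / k ! * exp (-x)) ≤ log (exp 1 / x) * ((k : ℝ) ^ 2 + x) := by
    rw [hneg, hL]
    -- the gap is `(-log x) (k (k - 1) + x) + k`
    nlinarith [mul_nonneg (neg_nonneg.mpr hlog) (add_nonneg hk hx0.le), Nat.cast_nonneg (α := ℝ) k]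
  rw [← neg_sq, ← mul_pow]
  exact pow_le_pow_left₀ hlo hhi 2

theorem tsum_poisson_mul_sq_log_le {x : ℝ} (hx0 : 0 < x) (hx1 : x ≤ 1) :
    ∑' k : ℕ, x ^ k / k ! * exp (-x) * log (x ^ k / k ! * exp (-x)) ^ 2
      ≤ 20 * x * log (exp 1 / x) ^ 2 := by
  have hmom := (hasSum_sq_sq_add_mul_poisson x).mul_left (log (exp 1 / x) ^ 2)
  have hle : ∀ k : ℕ, x ^ k / k ! * exp (-x) * log (x ^ k / k ! * exp (-x)) ^ 2
      ≤ log (exp 1 / x) ^ 2 * (((k : ℝ) ^ 2 + x) ^ 2 * (x ^ k / k ! * exp (-x))) := fun k => by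
    have hv : 0 ≤ x ^ k / k ! * exp (-x) := by positivity
    linear_combination mul_le_mul_of_nonneg_left (sq_log_poisson_le hx0 hx1 k) hv
  have hsummable := hmom.summable.of_nonneg_of_le (fun k => by positivity) hle
  calc ∑' k : ℕ, x ^ k / k ! * exp (-x) * log (x ^ k / k ! * exp (-x)) ^ 2
      ≤ log (exp 1 / x) ^ 2 * (x + 10 * x ^ 2 + 8 * x ^ 3 + x ^ 4) :=
        hasSum_le hle hsummable.hasSum hmom
    _ ≤ log (exp 1 / x) ^ 2 * (20 * x) := by
        gcongr
        nlinarith [pow_le_one₀ hx0.le hx1 (n := 2), pow_le_one₀ hx0.le hx1 (n := 3)]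
    _ = 20 * x * log (exp 1 / x) ^ 2 := by ring

theorem stmt_19 (lam : ℝ) (h0 : 0 < lam) (h1 : lam ≤ 1) :
    Real.sqrt (∑' k : ℕ,
        (lam ^ k / (Nat.factorial k) * Real.exp (-lam)) *
          (Real.log (lam ^ k / (Nat.factorial k) * Real.exp (-lam))) ^ 2) ≤
      5 * Real.sqrt lam * Real.log (Real.exp 1 / lam) := by
  have hL : 0 ≤ log (exp 1 / lam) :=
    log_nonneg ((one_le_div h0).mpr (h1.trans (by linarith [add_one_le_exp (1 : ℝ)])))
  rw [sqrt_le_iff, mul_pow, mul_pow, sq_sqrt h0.le]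
  refine ⟨by positivity, (tsum_poisson_mul_sq_log_le h0 h1).trans ?_⟩
  linarith [mul_nonneg h0.le (sq_nonneg (log (exp 1 / lam)))]
end
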